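/- Let f ∈ 𝒮(ℝⁿ), h ∈ 𝒮(ℝ), θ ∈ S^{n−1}, σ ∈ ℝ, r > 0. Then the n-dimensional Fourier transform of u ↦ P_h f(u, rθ) evaluated at σθ satisfies (P_h f)^(σθ, rθ) = f̂(σθ) · ĥ(−rσ). -/

import Mathlib

open MeasureTheory Real Complex SchwartzMap
open scoped RealInnerProductSpace

/-- The windowed ray transform `P_h f (u, v) = ∫ f(u + t v) h(t) dt`. -/
noncomputable def windowedRay {n : ℕ} (h : ℝ → ℂ) (f : EuclideanSpace ℝ (Fin n) → ℂ)
    (u v : EuclideanSpace ℝ (Fin n)) : ℂ :=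
  ∫ t : ℝ, f (u + t • v) * h t

/-- One-dimensional Fourier transform with convention `ĝ(ξ) = ∫ g(t) e^{-i t ξ} dt`. -/
noncomputable def ft1 (g : ℝ → ℂ) (ξ : ℝ) : ℂ :=
  ∫ t : ℝ, g t * Complex.exp (-(Complex.I * t * ξ))

/-- n-dimensional Fourier transform with convention `ĝ(ξ) = ∫ g(x) e^{-i x·ξ} dx`. -/
noncomputable def ftn {n : ℕ} (g : EuclideanSpace ℝ (Fin n) → ℂ)
    (ξ : EuclideanSpace ℝ (Fin n)) : ℂ :=
  ∫ x : EuclideanSpace ℝ (Fin n), g x * Complex.exp (-(Complex.I * (⟪x, ξ⟫ : ℝ)))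

/-!
The shear `(t, u) ↦ (t, u + t • v)` preserves the product measure, so after Fubini the
integrand `f(u + t • v) h(t) e^{-i⟪u, ξ⟫}` becomes `f(x) h(t) e^{-i⟪x - t • v, ξ⟫}`, which
splits as `(f(x) e^{-i⟪x, ξ⟫}) · (h(t) e^{i t ⟪v, ξ⟫})`. On the slice `v = r θ`, `ξ = σ θ`
with `‖θ‖ = 1` one has `⟪v, ξ⟫ = r σ`.
-/

theorem MeasureTheory.Integrable.mul_exp_neg_I_mul {X : Type*} [MeasurableSpace X] {ρ : Measure X}
    {g : X → ℂ} (hg : Integrable g ρ) {φ : X → ℝ} (hφ : Measurable φ) :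
    Integrable (fun x => g x * cexp (-(I * φ x))) ρ :=
  hg.mul_bdd (c := 1) (by fun_prop) (.of_forall fun x => by simp [norm_exp])

section
variable {E : Type*} [NormedAddCommGroup E] [InnerProductSpace ℝ E]

theorem exp_neg_I_inner_eq_mul_exp_inner_add_smul (u v ξ : E) (t : ℝ) :
    cexp (-(I * ⟪u, ξ⟫)) = cexp (-(I * t * ↑(-⟪v, ξ⟫))) * cexp (-(I * ⟪u + t • v, ξ⟫)) := by
  rw [← Complex.exp_add, inner_add_left, real_inner_smul_left]
  push_cast
  ring_nf

variable [MeasurableSpace E] [BorelSpace E] [SecondCountableTopology E]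
  {μ : Measure E} {ν : Measure ℝ} [SFinite μ] [SFinite ν]

theorem measurePreserving_add_smul_prod [μ.IsAddRightInvariant] (v : E) :
    MeasurePreserving (fun p : ℝ × E => (p.1, p.2 + p.1 • v)) (ν.prod μ) (ν.prod μ) :=
  (MeasurePreserving.id ν).skew_product (g := fun t u => u + t • v) (by fun_prop)
    (.of_forall fun t => map_add_right_eq_self μ (t • v))

theorem integral_integral_add_smul_mul_exp [μ.IsAddRightInvariant] {f : E → ℂ} {h : ℝ → ℂ}
    (hf : Integrable f μ) (hh : Integrable h ν) (v ξ : E) :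
    ∫ u, (∫ t, f (u + t • v) * h t ∂ν) * cexp (-(I * ⟪u, ξ⟫)) ∂μ
      = (∫ x, f x * cexp (-(I * ⟪x, ξ⟫)) ∂μ) * ∫ t, h t * cexp (-(I * t * ↑(-⟪v, ξ⟫))) ∂ν := by
  have hshear := measurePreserving_add_smul_prod (ν := ν) (μ := μ) v
  have hK : Integrable (fun p : ℝ × E =>
      h p.1 * cexp (-(I * p.1 * ↑(-⟪v, ξ⟫))) * (f p.2 * cexp (-(I * ⟪p.2, ξ⟫)))) (ν.prod μ) := by
    have hk := hh.mul_exp_neg_I_mul (φ := fun t => t * -⟪v, ξ⟫) (by fun_prop)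
    simp only [ofReal_mul, ← mul_assoc] at hk
    exact hk.mul_prod (hf.mul_exp_neg_I_mul (φ := fun x => ⟪x, ξ⟫) (by fun_prop))
  calc ∫ u, (∫ t, f (u + t • v) * h t ∂ν) * cexp (-(I * ⟪u, ξ⟫)) ∂μ
      = ∫ u, ∫ t, h t * cexp (-(I * t * ↑(-⟪v, ξ⟫))) *
          (f (u + t • v) * cexp (-(I * ⟪u + t • v, ξ⟫))) ∂ν ∂μ := by
        refine integral_congr_ae (.of_forall fun u => ?_)
        simp only [← integral_mul_const]
        congr 1 with t
        rw [exp_neg_I_inner_eq_mul_exp_inner_add_smul u v ξ t]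
        ring
    _ = ∫ p, h p.1 * cexp (-(I * p.1 * ↑(-⟪v, ξ⟫))) *
          (f (p.2 + p.1 • v) * cexp (-(I * ⟪p.2 + p.1 • v, ξ⟫))) ∂(ν.prod μ) :=
      (integral_prod_symm _ ((hshear.integrable_comp hK.aestronglyMeasurable).2 hK)).symm
    _ = ∫ p, h p.1 * cexp (-(I * p.1 * ↑(-⟪v, ξ⟫))) *
          (f p.2 * cexp (-(I * ⟪p.2, ξ⟫))) ∂(ν.prod μ) := by
      conv_rhs => rw [← hshear.map_eq]
      exact (integral_map hshear.measurable.aemeasurable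
        (hshear.map_eq ▸ hK.aestronglyMeasurable)).symm
    _ = _ := (integral_prod_mul (fun t => h t * cexp (-(I * t * ↑(-⟪v, ξ⟫))))
        (fun x => f x * cexp (-(I * ⟪x, ξ⟫)))).trans (mul_comm _ _)
end

theorem ftn_windowedRay {n : ℕ} {f : EuclideanSpace ℝ (Fin n) → ℂ} {h : ℝ → ℂ}
    (hf : Integrable f) (hh : Integrable h) (v ξ : EuclideanSpace ℝ (Fin n)) :
    ftn (fun u => windowedRay h f u v) ξ = ftn f ξ * ft1 h (-⟪v, ξ⟫) :=
  integral_integral_add_smul_mul_exp hf hh v ξ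

theorem stmt5_general {n : ℕ} (f : SchwartzMap (EuclideanSpace ℝ (Fin n)) ℂ) (h : SchwartzMap ℝ ℂ)
    (θ : EuclideanSpace ℝ (Fin n)) (hθ : ‖θ‖ = 1) (σ r : ℝ) :
    ftn (fun u => windowedRay h f u (r • θ)) (σ • θ)
      = ftn f (σ • θ) * ft1 h (-(r * σ)) := by
  have hinner : ⟪r • θ, σ • θ⟫ = r * σ := by
    rw [real_inner_smul_left, real_inner_smul_right, real_inner_self_eq_norm_sq, hθ]
    ring
  rw [ftn_windowedRay f.integrable h.integrable, hinner]

theorem stmt5 {n : ℕ} (f : SchwartzMap (EuclideanSpace ℝ (Fin n)) ℂ) (h : SchwartzMap ℝ ℂ)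
    (θ : EuclideanSpace ℝ (Fin n)) (hθ : ‖θ‖ = 1) (σ r : ℝ) (hr : 0 < r) :
    ftn (fun u => windowedRay h f u (r • θ)) (σ • θ)
      = ftn f (σ • θ) * ft1 h (-(r * σ)) :=
  stmt5_general f h θ hθ σ r
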